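/- (Proposition 2.2.) Let P be a positive integer, D ⊆ ZMod P, A a positive real, n₀ an integer, and b ∈ ℂ. Define the pilot X : ZMod P → ℂ by X[q] = A · exp(2πi·n₀·q/P) (well defined since the exponent depends only on n₀·q mod P), and its IQ-imbalanced version X^IQ[q] = X[q] + b · conj(X[−q]). Then for every integer k ≥ 0 and every p ∈ ZMod P, the (2k+1)-th IMD nonlinear basis built from X^IQ over D satisfies S_{2k+1}[p] = |Q_{2k+1}(D, p)| · A^{2k+1} · |1 + b|^{2k} · (1 + b) · exp(2πi·n₀·p/P). -/

import Mathlib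

open Finset Complex

/-- The IMD index set `Q_{2k+1}(D, p)`: tuples `(q_1, …, q_{2k+1}) ∈ D^{2k+1}` such that
`q_1 + ⋯ + q_{k+1} − (q_{k+2} + ⋯ + q_{2k+1}) = p` in `ZMod P`. -/
def imdSet (P : ℕ) [NeZero P] (D : Finset (ZMod P)) (k : ℕ) (p : ZMod P) :
    Finset (Fin (2 * k + 1) → ZMod P) :=
  Finset.univ.filter fun q =>
    (∀ i, q i ∈ D) ∧
      ((∑ i : Fin (2 * k + 1), if (i : ℕ) < k + 1 then q i else 0) -
        ∑ i : Fin (2 * k + 1), if (i : ℕ) < k + 1 then 0 else q i) = p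

/-- The `(2k+1)`-th IMD nonlinear basis over `D` built from a signal `X`. -/
noncomputable def imdBasis (P : ℕ) [NeZero P] (D : Finset (ZMod P)) (X : ZMod P → ℂ)
    (k : ℕ) (p : ZMod P) : ℂ :=
  ∑ q ∈ imdSet P D k p, ∏ i : Fin (2 * k + 1),
    if (i : ℕ) < k + 1 then X (q i) else (starRingEnd ℂ) (X (q i))

/-- `exp(2πi·n₀·t/P)` for `t : ZMod P`; well defined since only `n₀·t mod P` enters. -/
noncomputable def eChar (P : ℕ) [NeZero P] (n₀ : ℤ) (t : ZMod P) : ℂ :=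
  Complex.exp (2 * Real.pi * Complex.I * ((((n₀ : ZMod P) * t).val : ℕ) : ℂ) / P)

/-! The pilot is `A` times the additive character `ψ = toCircle (n₀ * ·)` of `ZMod P`, and
`conj (ψ (-q)) = ψ q`, so the IQ image term is `b` times the pilot itself: `X^IQ = A (1 + b) ψ`.
For a multiple `c ψ` of a character every summand of `S_{2k+1}[p]` equals
`c^(k+1) conj(c)^k ψ p`, because `ψ` turns the signed sum defining `Q_{2k+1}(D, p)` into a
product; finally `c^(k+1) conj(c)^k = |c|^(2k) c`. -/

open ComplexConjugate

lemma eChar_eq_toCircle (P : ℕ) [NeZero P] (n₀ : ℤ) (t : ZMod P) :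
    eChar P n₀ t = ZMod.toCircle.mulShift (n₀ : ZMod P) t := by
  rw [AddChar.mulShift_apply, ZMod.toCircle_apply, eChar]

lemma AddChar.map_sum_eq_prod {ι A M : Type*} [AddCommMonoid A] [CommMonoid M]
    (ψ : AddChar A M) (s : Finset ι) (f : ι → A) :
    ψ (∑ i ∈ s, f i) = ∏ i ∈ s, ψ (f i) := by
  induction s using Finset.cons_induction with
  | empty => simp
  | cons a s ha ih => rw [sum_cons, prod_cons, ψ.map_add_eq_mul, ih]

lemma AddChar.coe_map_neg_eq_conj {A : Type*} [AddGroup A] (ψ : AddChar A Circle) (a : A) :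
    (ψ (-a) : ℂ) = conj (ψ a : ℂ) := by
  rw [ψ.map_neg_eq_inv, Circle.coe_inv_eq_conj]

lemma Complex.pow_succ_mul_conj_pow (z : ℂ) (k : ℕ) :
    z ^ (k + 1) * conj z ^ k = ((‖z‖ : ℝ) : ℂ) ^ (2 * k) * z := by
  rw [pow_mul, ← mul_conj', mul_pow]
  ring

lemma card_filter_val_lt_succ (k : ℕ) :
    #{i : Fin (2 * k + 1) | (i : ℕ) < k + 1} = k + 1 := by
  rw [Fin.card_filter_val_lt]
  omega

lemma card_filter_not_val_lt_succ (k : ℕ) :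
    #{i : Fin (2 * k + 1) | ¬(i : ℕ) < k + 1} = k := by
  have := card_filter_add_card_filter_not (s := (univ : Finset (Fin (2 * k + 1))))
    (fun i => (i : ℕ) < k + 1)
  rw [card_filter_val_lt_succ, card_univ, Fintype.card_fin] at this
  omega

lemma signed_sum_eq_of_mem_imdSet {P : ℕ} [NeZero P] {D : Finset (ZMod P)} {k : ℕ}
    {p : ZMod P} {q : Fin (2 * k + 1) → ZMod P} (hq : q ∈ imdSet P D k p) :
    ∑ i : Fin (2 * k + 1), (if (i : ℕ) < k + 1 then q i else -q i) = p := by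
  obtain ⟨-, -, hsum⟩ := mem_filter.mp hq
  rw [← hsum, ← sum_sub_distrib]
  refine sum_congr rfl fun i _ => ?_
  split_ifs <;> simp

theorem imdBasis_mul_addChar (P : ℕ) [NeZero P] (D : Finset (ZMod P))
    (ψ : AddChar (ZMod P) Circle) (c : ℂ) (k : ℕ) (p : ZMod P) :
    imdBasis P D (fun q => c * ψ q) k p =
      #(imdSet P D k p) * (c ^ (k + 1) * conj c ^ k) * ψ p := by
  have summand : ∀ q ∈ imdSet P D k p,
      (∏ i : Fin (2 * k + 1),
        if (i : ℕ) < k + 1 then c * ψ (q i) else conj (c * ψ (q i))) =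
      (c ^ (k + 1) * conj c ^ k) * ψ p := by
    intro q hq
    have factor : ∀ i : Fin (2 * k + 1),
        (if (i : ℕ) < k + 1 then c * ψ (q i) else conj (c * ψ (q i))) =
        (if (i : ℕ) < k + 1 then c else conj c) *
          Circle.coeHom (ψ (if (i : ℕ) < k + 1 then q i else -q i)) := by
      intro i
      split_ifs
      · rfl
      · rw [map_mul, ← ψ.coe_map_neg_eq_conj]
        rfl
    rw [prod_congr rfl fun i _ => factor i, prod_mul_distrib, ← map_prod,
      ← ψ.map_sum_eq_prod, signed_sum_eq_of_mem_imdSet hq, prod_ite, prod_const, prod_const,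
      card_filter_val_lt_succ, card_filter_not_val_lt_succ]
    rfl
  rw [imdBasis, sum_congr rfl summand, sum_const, nsmul_eq_mul, ← mul_assoc]

theorem imdBasis_pilot_general (P : ℕ) [NeZero P] (D : Finset (ZMod P))
    (A : ℝ) (n₀ : ℤ) (b : ℂ)
    (X XIQ : ZMod P → ℂ)
    (hX : ∀ q : ZMod P, X q = (A : ℂ) * eChar P n₀ q)
    (hXIQ : ∀ q : ZMod P, XIQ q = X q + b * (starRingEnd ℂ) (X (-q)))
    (k : ℕ) (p : ZMod P) :
    imdBasis P D XIQ k p =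
      ((imdSet P D k p).card : ℂ) * (A : ℂ) ^ (2 * k + 1) *
        ((‖1 + b‖ : ℝ) : ℂ) ^ (2 * k) * (1 + b) * eChar P n₀ p := by
  have hXIQ_eq : XIQ = fun q => (A * (1 + b)) * ZMod.toCircle.mulShift (n₀ : ZMod P) q := by
    funext q
    rw [hXIQ, hX, hX, eChar_eq_toCircle, eChar_eq_toCircle, map_mul, conj_ofReal,
      ← AddChar.coe_map_neg_eq_conj, neg_neg]
    ring
  rw [hXIQ_eq, imdBasis_mul_addChar, eChar_eq_toCircle, map_mul, conj_ofReal, mul_pow,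
    mul_pow]
  linear_combination (#(imdSet P D k p) * (A : ℂ) ^ (2 * k + 1) *
    ZMod.toCircle.mulShift (n₀ : ZMod P) p) * Complex.pow_succ_mul_conj_pow (1 + b) k

/-- Proposition 2.2: for the pilot `X[q] = A·exp(2πi·n₀·q/P)` with IQ-imbalanced version
`X^IQ[q] = X[q] + b·conj(X[−q])`, the `(2k+1)`-th IMD nonlinear basis satisfies
`S_{2k+1}[p] = |Q_{2k+1}(D, p)| · A^{2k+1} · |1 + b|^{2k} · (1 + b) · exp(2πi·n₀·p/P)`. -/
theorem imdBasis_pilot (P : ℕ) [NeZero P] (D : Finset (ZMod P))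
    (A : ℝ) (hA : 0 < A) (n₀ : ℤ) (b : ℂ)
    (X XIQ : ZMod P → ℂ)
    (hX : ∀ q : ZMod P, X q = (A : ℂ) * eChar P n₀ q)
    (hXIQ : ∀ q : ZMod P, XIQ q = X q + b * (starRingEnd ℂ) (X (-q)))
    (k : ℕ) (p : ZMod P) :
    imdBasis P D XIQ k p =
      ((imdSet P D k p).card : ℂ) * (A : ℂ) ^ (2 * k + 1) *
        ((‖1 + b‖ : ℝ) : ℂ) ^ (2 * k) * (1 + b) * eChar P n₀ p :=
  imdBasis_pilot_general P D A n₀ b X XIQ hX hXIQ k p
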